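/- Let F be a strategyproof 2-facility mechanism on the line with approximation ratio at most ρ, and let x be an (i|j,k)-well-separated 3-agent instance with F_2(x) = x_j. Then for every (i|j,k)-well-separated instance x' obtained from x by replacing only x_k with x'_k (keeping x_i and x_j fixed), F_2(x') = x_j. -/

import Mathlib

noncomputable section

/-- Cost of an agent at location `a` under a pair of facilities. -/
def fcost (a : ℝ) (y : ℝ × ℝ) : ℝ := min |a - y.1| |a - y.2|

/-- Social cost: sum of the agents' distances to their nearest facility. -/
def scost {n : ℕ} (x : Fin n → ℝ) (y : ℝ × ℝ) : ℝ := ∑ i, fcost (x i) y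

/-- Optimal social cost over all placements of two facilities. -/
def optCost {n : ℕ} (x : Fin n → ℝ) : ℝ := ⨅ y : ℝ × ℝ, scost x y

/-- The mechanism outputs its facilities in increasing order. -/
def Ordered {n : ℕ} (F : (Fin n → ℝ) → ℝ × ℝ) : Prop := ∀ x, (F x).1 ≤ (F x).2

/-- No agent can strictly decrease her cost by misreporting her location. -/
def Strategyproof {n : ℕ} (F : (Fin n → ℝ) → ℝ × ℝ) : Prop :=
  ∀ (x : Fin n → ℝ) (i : Fin n) (y : ℝ),
    fcost (x i) (F x) ≤ fcost (x i) (F (Function.update x i y))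

/-- `F` has approximation ratio (at most) `ρ` for the social cost. -/
def ApproxRatio {n : ℕ} (F : (Fin n → ℝ) → ℝ × ℝ) (ρ : ℝ) : Prop :=
  ∀ x, scost x (F x) ≤ ρ * optCost x

/-- An `(i|j,k)`-well-separated 3-agent instance. -/
def WellSep (ρ : ℝ) (x : Fin 3 → ℝ) (i j k : Fin 3) : Prop :=
  x i < x j ∧ x j < x k ∧ ρ * (x k - x j) < x j - x i

/-!
Move agent `k` outward in steps of ratio less than `2`. At `x`, agent `k` pays `x_k - x_j`, so by
strategyproofness no facility of the new outcome lies strictly closer to `x_k` than `x_j` does: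
the right facility is either at most `x_j` or at least `2 x_k - x_j`, beyond the new position of
`k`. It cannot lie left of `x_j`, because agent `k` can always secure cost `x'_k - x_j` by
reporting `x_j` (the resulting instance has optimal cost `0`, which the mechanism must then
attain). If it lay far to the right, agent `j` would have to be served by the left facility,
forcing social cost at least `x_j - x_i > ρ (x'_k - x_j) ≥ ρ · OPT`.
-/

open Set Function

lemma fcost_nonneg (a : ℝ) (y : ℝ × ℝ) : 0 ≤ fcost a y :=
  le_min (abs_nonneg _) (abs_nonneg _)

lemma fcost_eq_zero_iff {a : ℝ} {y : ℝ × ℝ} : fcost a y = 0 ↔ a = y.1 ∨ a = y.2 := by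
  unfold fcost
  constructor
  · intro h
    rcases min_choice |a - y.1| |a - y.2| with hm | hm <;> rw [hm, abs_eq_zero, sub_eq_zero] at h
    exacts [Or.inl h, Or.inr h]
  · rintro (h | h) <;> simp [h]

lemma fcost_le_abs_sub_add (a b : ℝ) (y : ℝ × ℝ) : fcost a y ≤ |a - b| + fcost b y := by
  unfold fcost
  rw [← min_add_add_left]
  exact min_le_min (abs_sub_le _ _ _) (abs_sub_le _ _ _)

lemma fcost_eq_sub_of_le {a : ℝ} {y : ℝ × ℝ} (hy : y.1 ≤ y.2) (ha : y.2 ≤ a) :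
    fcost a y = a - y.2 := by
  unfold fcost
  rw [abs_of_nonneg (by linarith), abs_of_nonneg (by linarith)]
  exact min_eq_right (by linarith)

lemma sub_le_fcost_add_fcost (p : ℝ) {q : ℝ} {y : ℝ × ℝ} (hq : q ≤ y.2)
    (hqy : fcost q y = |q - y.1|) : q - p ≤ fcost p y + fcost q y := by
  rw [hqy, fcost, ← min_add_add_right]
  refine le_min ?_ ?_
  · linarith [neg_abs_le (p - y.1), le_abs_self (q - y.1)]
  · linarith [neg_abs_le (p - y.2), abs_nonneg (q - y.1)]

lemma scost_nonneg {n : ℕ} (x : Fin n → ℝ) (y : ℝ × ℝ) : 0 ≤ scost x y :=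
  Finset.sum_nonneg fun _ _ => fcost_nonneg _ _

lemma scost_eq_zero_iff {n : ℕ} {x : Fin n → ℝ} {y : ℝ × ℝ} :
    scost x y = 0 ↔ ∀ m, fcost (x m) y = 0 := by
  simp [scost, Finset.sum_eq_zero_iff_of_nonneg, fcost_nonneg]

lemma Fin.eq_or_eq_or_eq_of_ne {i j k : Fin 3} (hij : i ≠ j) (hik : i ≠ k) (hjk : j ≠ k)
    (m : Fin 3) : m = i ∨ m = j ∨ m = k := by
  omega

lemma scost_fin_three {i j k : Fin 3} (hij : i ≠ j) (hik : i ≠ k) (hjk : j ≠ k)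
    (x : Fin 3 → ℝ) (y : ℝ × ℝ) :
    scost x y = fcost (x i) y + fcost (x j) y + fcost (x k) y := by
  have huniv : (Finset.univ : Finset (Fin 3)) = {i, j, k} := by
    ext m; simpa using Fin.eq_or_eq_or_eq_of_ne hij hik hjk m
  rw [scost, huniv, Finset.sum_insert (by simp [hij, hik]), Finset.sum_insert (by simp [hjk]),
    Finset.sum_singleton, add_assoc]

lemma optCost_le {n : ℕ} (x : Fin n → ℝ) (y : ℝ × ℝ) : optCost x ≤ scost x y :=
  ciInf_le ⟨0, by rintro s ⟨y, rfl⟩; exact scost_nonneg _ _⟩ y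

lemma optCost_nonneg {n : ℕ} (x : Fin n → ℝ) : 0 ≤ optCost x :=
  le_ciInf fun _ => scost_nonneg _ _

lemma optCost_le_abs_sub {i j k : Fin 3} (hij : i ≠ j) (hik : i ≠ k) (hjk : j ≠ k)
    (x : Fin 3 → ℝ) : optCost x ≤ |x k - x j| := by
  calc optCost x ≤ scost x (x i, x j) := optCost_le x _
    _ = fcost (x k) (x i, x j) := by
      have hi : fcost (x i) (x i, x j) = 0 := fcost_eq_zero_iff.2 (.inl rfl)
      have hj : fcost (x j) (x i, x j) = 0 := fcost_eq_zero_iff.2 (.inr rfl)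
      rw [scost_fin_three hij hik hjk, hi, hj, zero_add, zero_add]
    _ ≤ |x k - x j| := min_le_right _ _

lemma ApproxRatio.fcost_eq_zero {n : ℕ} {F : (Fin n → ℝ) → ℝ × ℝ} {ρ : ℝ}
    (happ : ApproxRatio F ρ) {x : Fin n → ℝ} {y : ℝ × ℝ} (hy : scost x y = 0) (m : Fin n) :
    fcost (x m) (F x) = 0 := by
  have hopt : optCost x = 0 := le_antisymm (hy ▸ optCost_le x y) (optCost_nonneg x)
  have hF : scost x (F x) = 0 :=
    le_antisymm (by simpa [hopt] using happ x) (scost_nonneg _ _)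
  exact scost_eq_zero_iff.1 hF m

/-- Reporting `x k` leaves only two distinct locations, an instance of optimal cost `0`. -/
lemma Strategyproof.fcost_le_abs_sub {F : (Fin 3 → ℝ) → ℝ × ℝ} {ρ : ℝ} (hsp : Strategyproof F)
    (happ : ApproxRatio F ρ) {i j k : Fin 3} (hij : i ≠ j) (hik : i ≠ k) (hjk : j ≠ k)
    (x : Fin 3 → ℝ) : fcost (x j) (F x) ≤ |x j - x k| := by
  set z := update x j (x k) with hz
  have hzk : z k = x k := update_of_ne hjk.symm _ _
  have hzero : scost z (x i, x k) = 0 := by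
    refine scost_eq_zero_iff.2 fun m => fcost_eq_zero_iff.2 ?_
    rcases Fin.eq_or_eq_or_eq_of_ne hij hik hjk m with rfl | rfl | rfl
    · simp [hz, hij]
    · simp [hz]
    · simp [hzk]
  calc fcost (x j) (F x) ≤ fcost (x j) (F z) := hsp x j (x k)
    _ ≤ |x j - x k| + fcost (x k) (F z) := fcost_le_abs_sub_add _ _ _
    _ = |x j - x k| := by rw [← hzk, happ.fcost_eq_zero hzero k, add_zero]

lemma Strategyproof.sub_le_fcost_update {n : ℕ} {F : (Fin n → ℝ) → ℝ × ℝ}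
    (hsp : Strategyproof F) (hord : Ordered F) {x : Fin n → ℝ} {k : Fin n} (hk : (F x).2 ≤ x k)
    (t : ℝ) : x k - (F x).2 ≤ fcost (x k) (F (update x k t)) := by
  simpa only [fcost_eq_sub_of_le (hord x) hk] using hsp x k t

theorem snd_update_eq_of_lt_two_mul {F : (Fin 3 → ℝ) → ℝ × ℝ} {ρ : ℝ} (hρ : 0 ≤ ρ)
    (hord : Ordered F) (hsp : Strategyproof F) (happ : ApproxRatio F ρ)
    {i j k : Fin 3} (hij : i ≠ j) (hik : i ≠ k) (hjk : j ≠ k) {x : Fin 3 → ℝ} {t : ℝ}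
    (hws : WellSep ρ x i j k) (hws' : WellSep ρ (update x k t) i j k) (hF : (F x).2 = x j)
    (ht : t - x j < 2 * (x k - x j)) : (F (update x k t)).2 = x j := by
  set x' := update x k t
  have hx'i : x' i = x i := update_of_ne hik _ _
  have hx'j : x' j = x j := update_of_ne hjk _ _
  have hx'k : x' k = t := update_self _ _ _
  obtain ⟨hxij, hxjt, hsep⟩ := hws'
  simp only [hx'i, hx'j, hx'k] at hxij hxjt hsep
  have hhole : x k - x j ≤ fcost (x k) (F x') :=
    hF ▸ hsp.sub_le_fcost_update hord (hF ▸ hws.2.1.le) t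
  have hk : fcost t (F x') ≤ t - x j := by
    simpa [hx'j, hx'k, abs_of_pos (sub_pos.2 hxjt)] using
      hsp.fcost_le_abs_sub happ hik hij hjk.symm x'
  have hj : fcost (x j) (F x') ≤ t - x j := by
    simpa [hx'j, hx'k, abs_sub_comm, abs_of_pos (sub_pos.2 hxjt)] using
      hsp.fcost_le_abs_sub happ hij hik hjk x'
  have hcost : scost x' (F x') ≤ ρ * (t - x j) := by
    refine (happ x').trans (mul_le_mul_of_nonneg_left ?_ hρ)
    simpa [hx'j, hx'k, abs_of_pos (sub_pos.2 hxjt)] using optCost_le_abs_sub hij hik hjk x'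
  rw [scost_fin_three hij hik hjk, hx'i, hx'j, hx'k] at hcost
  rcases lt_trichotomy (F x').2 (x j) with hb | hb | hb
  · rw [fcost_eq_sub_of_le (hord x') (by linarith)] at hk
    linarith
  · exact hb
  · have hfar : 2 * (x k - x j) ≤ (F x').2 - x j := by
      have := hhole.trans (min_le_right _ _)
      rcases abs_cases (x k - (F x').2) with ⟨h, _⟩ | ⟨h, _⟩ <;> linarith
    have hleft : fcost (x j) (F x') = |x j - (F x').1| := by
      have hright : t - x j < |x j - (F x').2| := by
        rw [abs_sub_comm, abs_of_pos (by linarith)]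
        linarith
      exact min_eq_left (((min_le_iff.1 hj).resolve_right hright.not_ge).trans hright.le)
    have := sub_le_fcost_add_fcost (x i) hb.le hleft
    linarith [fcost_nonneg t (F x')]

lemma forall_mem_Ioo_of_doubling {P : ℝ → Prop} {c M u₀ : ℝ} (hu₀ : u₀ ∈ Ioo c M) (h₀ : P u₀)
    (hstep : ∀ u ∈ Ioo c M, ∀ v ∈ Ioo c M, v - c < 2 * (u - c) → P u → P v) :
    ∀ v ∈ Ioo c M, P v := by
  suffices h : ∀ n : ℕ, ∀ v ∈ Ioo c M, v - c ≤ (3 / 2) ^ n * (u₀ - c) → P v by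
    intro v hv
    obtain ⟨n, hn⟩ := pow_unbounded_of_one_lt ((v - c) / (u₀ - c)) (by norm_num : (1 : ℝ) < 3 / 2)
    rw [div_lt_iff₀ (sub_pos.2 hu₀.1)] at hn
    exact h n v hv hn.le
  intro n
  induction n with
  | zero =>
    intro v hv hle
    exact hstep u₀ hu₀ v hv (by linarith [hu₀.1]) h₀
  | succ n ih =>
    intro v hv hle
    have hs : c + 2 / 3 * (v - c) ∈ Ioo c M := ⟨by linarith [hv.1], by linarith [hv.1, hv.2]⟩
    refine hstep _ hs v hv (by linarith [hv.1]) (ih _ hs ?_)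
    rw [pow_succ] at hle
    linarith

lemma wellSep_update_iff {ρ : ℝ} (hρ : 0 < ρ) {x : Fin 3 → ℝ} {i j k : Fin 3} (hik : i ≠ k)
    (hjk : j ≠ k) (hij : x i < x j) (t : ℝ) :
    WellSep ρ (update x k t) i j k ↔ t ∈ Ioo (x j) (x j + (x j - x i) / ρ) := by
  simp only [WellSep, update_of_ne hik, update_of_ne hjk, update_self, mem_Ioo, hij, true_and]
  rw [← sub_lt_iff_lt_add', lt_div_iff₀ hρ, mul_comm]

/-- Proposition `c_pulls_b`: if `x` is `(i|j,k)`-well-separated and the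
rightmost facility is at `x_j`, then for every `(i|j,k)`-well-separated
instance obtained by moving only agent `k`, the rightmost facility stays
at `x_j`. -/
theorem c_pulls_b (F : (Fin 3 → ℝ) → ℝ × ℝ) (ρ : ℝ) (hρ : 1 ≤ ρ)
    (hord : Ordered F) (hsp : Strategyproof F) (happ : ApproxRatio F ρ)
    (x : Fin 3 → ℝ) (i j k : Fin 3)
    (hij : i ≠ j) (hik : i ≠ k) (hjk : j ≠ k)
    (hws : WellSep ρ x i j k) (hF : (F x).2 = x j)
    (x'k : ℝ) (hws' : WellSep ρ (Function.update x k x'k) i j k) :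
    (F (Function.update x k x'k)).2 = x j := by
  have hρ0 : 0 < ρ := by linarith
  have hS := wellSep_update_iff hρ0 hik hjk hws.1
  have hx : update x k (x k) = x := update_eq_self k x
  refine forall_mem_Ioo_of_doubling (P := fun t => (F (update x k t)).2 = x j)
    ((hS (x k)).1 (by rwa [hx])) (by simp only [hx]; exact hF) ?_ x'k ((hS x'k).1 hws')
  intro u hu v hv huv hPu
  have hxj : update x k u j = x j := update_of_ne hjk _ _
  have hxk : update x k u k = u := update_self _ _ _
  have step := snd_update_eq_of_lt_two_mul hρ0.le hord hsp happ hij hik hjk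
    ((hS u).2 hu) (by rwa [update_idem, hS]) (hxj ▸ hPu) (by rwa [hxj, hxk])
  rwa [update_idem, hxj] at step
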